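/- arXiv:2012.05118 — 3 statements merged into one kernel-verified Lean document; each statement's English description precedes it below -/
import Mathlib

section
/- Eigenvalue bounds for biased shuffles with α ≥ 1: let α ≥ 1 and let λ ⊢ n be a partition with first part λ₁ = n − k. Then eig_α(T_λ^↓) ≤ 1 − k/n; moreover, if k ≤ n/4 then eig_α(T_λ^↓) ≤ 1 − k·(n−k)·N_{α−1}(n)/(n·N_α(n)). -/
open scoped BigOperators

/-- `N_α(n) = ∑_{j=1}^n j^α`. -/
noncomputable def Nalpha (α : ℝ) (n : ℕ) : ℝ := ∑ j ∈ Finset.Icc 1 n, (j : ℝ) ^ α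

/-- The biased eigenvalue statistic of a tableau-filling `T` of the Young diagram `μ`:
`eig_α(T) = (1/N_α(n)) ∑_{(i,j)∈μ} (j-i+1)·T(i,j)^{α−1}` (cells are 0-indexed, which
leaves `j-i+1` unchanged). -/
noncomputable def eigb (α : ℝ) (μ : YoungDiagram) (T : ℕ × ℕ → ℕ) : ℝ :=
  (Nalpha α μ.card)⁻¹ *
    ∑ c ∈ μ.cells, (((c.2 : ℝ) - (c.1 : ℝ) + 1) * ((T c : ℝ) ^ (α - 1)))
/-- The column-reading tableau `T_λ^↓`: entries `1,…,n` inserted down columns, top to bottom,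
leftmost column first. -/
def colTab (μ : YoungDiagram) : ℕ × ℕ → ℕ := fun c =>
  (μ.cells.filter (fun c' => c'.2 < c.2 ∨ (c'.2 = c.2 ∧ c'.1 ≤ c.1))).card

/-!
Write `v(c)` for the entry of `T_λ^↓` in the cell `c = (i, j)`, `s_j` for the number of cells in
the columns left of column `j`, and `w = n - k` for the number of columns. Then `v(c) = s_j + i + 1`
exceeds `j - i + 1` by the gap `d(c) = 2i + (s_j - j) ≥ 0`, so
`eig_α(T_λ^↓) = 1 - D / N_α(n)` with `D = ∑_c d(c) v(c)^{α-1}`, and both bounds are lower bounds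
on `D`.

For `n D ≥ k N_α(n)`, Abel summation against the nondecreasing weights `m ↦ m^{α-1}` reduces the
claim to `∑ (n d(c) - k v(c)) ≥ 0` over each set `{c | v(c) ≥ r}`. Such a set is a union of lower
segments of columns, the summand increases down a column, and the sum over a whole column is
nonnegative because the first `j + 1` columns, being the longest, have at least the average length
`n / w`.

For the second bound, `d(c) ≥ min(⌊v(c)/2⌋, k)`, and Chebyshev's sum inequality for the two
nondecreasing sequences `min(⌊m/2⌋, k)` and `m^{α-1}` gives `n D ≥ k (n - k) N_{α-1}(n)`, since
`∑_{m=1}^n min(⌊m/2⌋, k) = k (n - k)` when `2k ≤ n`.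
-/

open Finset

section Summation

variable {R : Type*} [CommRing R] [LinearOrder R] [IsStrictOrderedRing R]

theorem sum_filter_nonneg_of_monotone {a : ℕ → R} (ha : Monotone a) {N : ℕ}
    (hsum : 0 ≤ ∑ i ∈ range N, a i) {p : ℕ → Prop} [DecidablePred p] (hp : Monotone p) :
    0 ≤ ∑ i ∈ range N with p i, a i := by
  by_cases hnonneg : ∀ i ∈ range N, p i → 0 ≤ a i
  · exact sum_nonneg fun i hi => hnonneg i (mem_filter.1 hi).1 (mem_filter.1 hi).2
  push Not at hnonneg
  obtain ⟨i₀, -, hpi₀, hai₀⟩ := hnonneg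
  have hrest : ∑ i ∈ range N with ¬p i, a i ≤ 0 := by
    refine sum_nonpos fun i hi => ?_
    have hlt : i < i₀ := lt_of_not_ge fun hle => (mem_filter.1 hi).2 (hp hle hpi₀)
    exact (ha hlt.le).trans hai₀.le
  linarith [sum_filter_add_sum_filter_not (range N) p a]

theorem sum_mul_nonneg_of_sum_filter_le_nonneg {ι : Type*} (s : Finset ι) (v : ι → ℕ)
    {f : ℕ → R} (hf : Monotone f) (hf0 : 0 ≤ f 0) (g : ι → R)
    (hg : ∀ r, 0 ≤ ∑ x ∈ s with r ≤ v x, g x) :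
    0 ≤ ∑ x ∈ s, f (v x) * g x := by
  obtain ⟨N, hN⟩ : ∃ N, ∀ x ∈ s, v x ≤ N := ⟨s.sup v, fun x hx => le_sup hx⟩
  have htelescope : ∀ x ∈ s, f (v x) * g x =
      f 0 * g x + ∑ r ∈ range N, if r + 1 ≤ v x then (f (r + 1) - f r) * g x else 0 := by
    intro x hx
    have hrange : {r ∈ range N | r + 1 ≤ v x} = range (v x) := by
      ext r
      simp only [mem_filter, mem_range]
      have hvx := hN x hx
      omega
    rw [← sum_filter, hrange, ← sum_mul, sum_range_sub]
    ring
  rw [sum_congr rfl htelescope, sum_add_distrib, ← mul_sum, sum_comm]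
  refine add_nonneg (mul_nonneg hf0 (by simpa using hg 0)) (sum_nonneg fun r _ => ?_)
  rw [← sum_filter, ← mul_sum]
  exact mul_nonneg (sub_nonneg.2 (hf r.le_succ)) (hg (r + 1))

end Summation

theorem sum_card_filter_le_eq_sum_Icc {ι α M : Type*} [LinearOrder α] [AddCommMonoid M]
    (s : Finset ι) {key : ι → α} (hkey : Set.InjOn key s) (F : ℕ → M) :
    ∑ x ∈ s, F #{y ∈ s | key y ≤ key x} = ∑ m ∈ Icc 1 #s, F m := by
  set rank : ι → ℕ := fun x => #{y ∈ s | key y ≤ key x}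
  have hrank_lt : ∀ x ∈ s, ∀ y ∈ s, key x < key y → rank x < rank y := by
    intro x _ y hy hxy
    refine card_lt_card ((ssubset_iff_of_subset ?_).2 ⟨y, ?_, ?_⟩)
    · exact monotone_filter_right s fun z _ hz => hz.trans hxy.le
    · simp [hy]
    · simp [hxy.not_ge]
  have hinj : Set.InjOn rank s := by
    intro x hx y hy hxy
    by_contra hne
    rcases lt_or_gt_of_ne (hkey.ne hx hy hne) with hlt | hlt
    · exact (hrank_lt x hx y hy hlt).ne hxy
    · exact (hrank_lt y hy x hx hlt).ne' hxy
  have himage : s.image rank = Icc 1 #s := by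
    refine eq_of_subset_of_card_le (fun m hm => ?_) ?_
    · obtain ⟨x, hx, rfl⟩ := mem_image.1 hm
      exact mem_Icc.2 ⟨card_pos.2 ⟨x, by simp [hx]⟩, card_filter_le _ _⟩
    · rw [Nat.card_Icc, card_image_of_injOn hinj]
      omega
  rw [← himage, sum_image hinj]

section Antitone

variable {h : ℕ → ℕ}

theorem Antitone.mul_le_sum_range (hh : Antitone h) (j : ℕ) : j * h j ≤ ∑ b ∈ range j, h b := by
  simpa using card_nsmul_le_sum (range j) h (h j) fun b hb => hh (mem_range.1 hb).le

theorem Antitone.sum_Ico_le (hh : Antitone h) (j w : ℕ) : ∑ b ∈ Ico j w, h b ≤ (w - j) * h j := by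
  simpa using sum_le_card_nsmul (Ico j w) h (h j) fun b hb => hh (mem_Ico.1 hb).1

theorem Antitone.mul_sum_range_le (hh : Antitone h) {j w : ℕ} (hjw : j ≤ w) :
    j * ∑ b ∈ range w, h b ≤ w * ∑ b ∈ range j, h b := by
  rw [← sum_range_add_sum_Ico h hjw]
  calc j * (∑ b ∈ range j, h b + ∑ b ∈ Ico j w, h b)
      ≤ j * ∑ b ∈ range j, h b + (w - j) * (j * h j) := by
        rw [mul_add, mul_left_comm]
        gcongr
        exact hh.sum_Ico_le j w
    _ ≤ j * ∑ b ∈ range j, h b + (w - j) * ∑ b ∈ range j, h b := by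
        gcongr
        exact hh.mul_le_sum_range j
    _ = w * ∑ b ∈ range j, h b := by rw [← add_mul, Nat.add_sub_cancel' hjw]

end Antitone

theorem sum_Icc_div_two (k : ℕ) : ∑ m ∈ Icc 1 (2 * k), m / 2 = k * k := by
  induction k with
  | zero => simp
  | succ k ih =>
    rw [show 2 * (k + 1) = 2 * k + 1 + 1 by ring, sum_Icc_succ_top (by omega),
      sum_Icc_succ_top (by omega), ih, show (2 * k + 1) / 2 = k by omega,
      show (2 * k + 1 + 1) / 2 = k + 1 by omega]
    ring

theorem sum_Icc_min_div_two (k : ℕ) {n : ℕ} (hn : 2 * k ≤ n) :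
    ∑ m ∈ Icc 1 n, min (m / 2) k = k * (n - k) := by
  induction n, hn using Nat.le_induction with
  | base =>
    rw [sum_congr rfl fun m hm => min_eq_left (by have := (mem_Icc.1 hm).2; omega),
      sum_Icc_div_two, show 2 * k - k = k by omega]
  | succ n hn ih =>
    rw [sum_Icc_succ_top (by omega), ih, min_eq_right (by omega),
      show n + 1 - k = n - k + 1 by omega]
    ring

theorem monotone_natCast_rpow {p : ℝ} (hp : 0 ≤ p) : Monotone fun m : ℕ => (m : ℝ) ^ p :=
  fun a b hab => Real.rpow_le_rpow (Nat.cast_nonneg a) (by exact_mod_cast hab) hp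

theorem Nalpha_pos (α : ℝ) {n : ℕ} (hn : 0 < n) : 0 < Nalpha α n :=
  sum_pos (fun m hm => Real.rpow_pos_of_pos (by exact_mod_cast (mem_Icc.1 hm).1) α)
    (nonempty_Icc.2 hn)

namespace YoungDiagram

variable (μ : YoungDiagram)

theorem colLen_antitone : Antitone μ.colLen := μ.colLen_anti

theorem colLen_pos {j : ℕ} (hj : j < μ.rowLen 0) : 0 < μ.colLen j :=
  mem_iff_lt_colLen.1 (mem_iff_lt_rowLen.2 hj)

theorem mk_mem_iff {i j : ℕ} : (i, j) ∈ μ ↔ j < μ.rowLen 0 ∧ i < μ.colLen j := by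
  rw [← mem_iff_lt_colLen, ← @mem_iff_lt_rowLen μ 0 j]
  exact ⟨fun h => ⟨μ.up_left_mem (Nat.zero_le i) le_rfl h, h⟩, And.right⟩

theorem sum_cells {M : Type*} [AddCommMonoid M] (F : ℕ × ℕ → M) :
    ∑ c ∈ μ.cells, F c = ∑ j ∈ range (μ.rowLen 0), ∑ i ∈ range (μ.colLen j), F (i, j) :=
  sum_finset_product_right _ _ _ fun ⟨i, j⟩ => by simp [mk_mem_iff]

def colPrefixSum (j : ℕ) : ℕ := ∑ b ∈ range j, μ.colLen b

theorem card_eq_colPrefixSum : μ.card = μ.colPrefixSum (μ.rowLen 0) := by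
  rw [YoungDiagram.card, card_eq_sum_ones, sum_cells]
  simp [colPrefixSum]

theorem le_colPrefixSum {j : ℕ} (hj : j ≤ μ.rowLen 0) : j ≤ μ.colPrefixSum j := by
  simpa [colPrefixSum] using card_nsmul_le_sum (range j) μ.colLen 1 fun b hb =>
    μ.colLen_pos ((mem_range.1 hb).trans_le hj)

end YoungDiagram

section ColumnTableau

variable (μ : YoungDiagram)

theorem colTab_mk {i j : ℕ} (hij : (i, j) ∈ μ) : colTab μ (i, j) = μ.colPrefixSum j + i + 1 := by
  have hi := YoungDiagram.mem_iff_lt_colLen.1 hij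
  rw [colTab, card_eq_sum_ones, sum_finset_product_right _ (range (j + 1))
    (fun b => if b < j then range (μ.colLen b) else range (i + 1))]
  · rw [sum_range_succ, if_neg (lt_irrefl j),
      sum_congr rfl fun b hb => by rw [if_pos (mem_range.1 hb)]]
    simp [YoungDiagram.colPrefixSum, add_assoc]
  · rintro ⟨a, b⟩
    simp only [mem_filter, YoungDiagram.mem_cells, YoungDiagram.mem_iff_lt_colLen, mem_range]
    rcases lt_trichotomy b j with hb | rfl | hb
    · simp [hb, hb.trans (Nat.lt_succ_self j)]
    · simp only [lt_irrefl, if_false, mem_range, false_or, true_and, lt_add_one]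
      constructor <;> intro h <;> omega
    · simp only [show ¬b < j by omega, if_false, mem_range, false_or]
      constructor <;> intro h <;> omega

theorem sum_colTab {M : Type*} [AddCommMonoid M] (F : ℕ → M) :
    ∑ c ∈ μ.cells, F (colTab μ c) = ∑ m ∈ Icc 1 μ.card, F m := by
  have hkey : Set.InjOn (fun c : ℕ × ℕ => toLex (c.2, c.1)) μ.cells := fun c _ d _ h => by
    simpa [Prod.ext_iff, and_comm] using h
  rw [← sum_card_filter_le_eq_sum_Icc μ.cells hkey F]
  simp [colTab, Prod.Lex.toLex_le_toLex]

theorem Nalpha_eq_sum_colTab (α : ℝ) :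
    Nalpha α μ.card = ∑ c ∈ μ.cells, (colTab μ c : ℝ) * (colTab μ c : ℝ) ^ (α - 1) := by
  calc Nalpha α μ.card = ∑ m ∈ Icc 1 μ.card, (m : ℝ) * (m : ℝ) ^ (α - 1) :=
        sum_congr rfl fun m hm => by
          have hm0 : (m : ℝ) ≠ 0 := by exact_mod_cast (Nat.one_le_iff_ne_zero.1 (mem_Icc.1 hm).1)
          rw [Real.rpow_sub_one hm0, mul_div_cancel₀ _ hm0]
    _ = _ := (sum_colTab μ fun m : ℕ => (m : ℝ) * (m : ℝ) ^ (α - 1)).symm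

def colTabGap (c : ℕ × ℕ) : ℕ := 2 * c.1 + (μ.colPrefixSum c.2 - c.2)

theorem colTab_eq_add_colTabGap {c : ℕ × ℕ} (hc : c ∈ μ) :
    (colTab μ c : ℝ) = (c.2 - c.1 + 1) + colTabGap μ c := by
  obtain ⟨i, j⟩ := c
  have hj := μ.le_colPrefixSum ((μ.mk_mem_iff.1 hc).1.le)
  rw [colTab_mk μ hc, colTabGap]
  push_cast [Nat.cast_sub hj]
  ring

noncomputable def colTabGapSum (α : ℝ) : ℝ :=
  ∑ c ∈ μ.cells, (colTabGap μ c : ℝ) * (colTab μ c : ℝ) ^ (α - 1)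

theorem eigb_colTab_eq (α : ℝ) (hμ : 0 < μ.card) :
    eigb α μ (colTab μ) = 1 - colTabGapSum μ α / Nalpha α μ.card := by
  have hN := (Nalpha_pos α hμ).ne'
  have hnum : ∑ c ∈ μ.cells, ((c.2 : ℝ) - c.1 + 1) * (colTab μ c : ℝ) ^ (α - 1) =
      Nalpha α μ.card - colTabGapSum μ α := by
    rw [Nalpha_eq_sum_colTab, colTabGapSum, ← sum_sub_distrib]
    refine sum_congr rfl fun c hc => ?_
    rw [colTab_eq_add_colTabGap μ hc]
    ring
  rw [eigb, hnum]
  field_simp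

theorem min_colTab_div_two_le_colTabGap {k : ℕ} (hk : μ.rowLen 0 + k = μ.card) {c : ℕ × ℕ}
    (hc : c ∈ μ) : min (colTab μ c / 2) k ≤ colTabGap μ c := by
  obtain ⟨i, j⟩ := c
  obtain ⟨hj, hi⟩ := μ.mk_mem_iff.1 hc
  rw [colTab_mk μ hc, colTabGap]
  by_cases h2 : 2 ≤ μ.colLen j
  · have hprefix : j * 2 ≤ μ.colPrefixSum j :=
      (Nat.mul_le_mul_left j h2).trans (μ.colLen_antitone.mul_le_sum_range j)
    exact min_le_of_left_le (by dsimp only; omega)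
  · -- column `j` and all later ones have length one, so they add no gap
    have htail : ∑ b ∈ Ico j (μ.rowLen 0), μ.colLen b ≤ μ.rowLen 0 - j :=
      (μ.colLen_antitone.sum_Ico_le j _).trans (mul_le_of_le_one_right' (by omega))
    have hsplit := sum_range_add_sum_Ico μ.colLen hj.le
    have hcard := μ.card_eq_colPrefixSum
    simp only [YoungDiagram.colPrefixSum] at hcard ⊢
    exact min_le_of_right_le (by omega)

theorem sum_colTabGap_column_nonneg {k : ℕ} (hk : μ.rowLen 0 + k = μ.card) {j : ℕ}
    (hj : j < μ.rowLen 0) :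
    0 ≤ ∑ i ∈ range (μ.colLen j),
      ((μ.card : ℝ) * colTabGap μ (i, j) - k * (μ.colPrefixSum j + i + 1)) := by
  have hkey : (j + 1) * μ.card ≤ μ.rowLen 0 * (μ.colPrefixSum j + μ.colLen j) := by
    simpa [YoungDiagram.colPrefixSum, sum_range_succ, μ.card_eq_colPrefixSum] using
      μ.colLen_antitone.mul_sum_range_le hj
  have hsj := μ.le_colPrefixSum hj.le
  have hh := μ.colLen_pos hj
  simp only [colTabGap]
  set h := μ.colLen j
  set s := μ.colPrefixSum j
  have hgauss : ∑ i ∈ range h, (i : ℝ) = h * (h - 1) / 2 := by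
    have := congrArg (Nat.cast (R := ℝ)) (sum_range_id_mul_two h)
    push_cast [Nat.cast_sub (Nat.one_le_iff_ne_zero.2 hh.ne')] at this
    linarith
  have hkeyR : ((j : ℝ) + 1) * μ.card ≤ μ.rowLen 0 * (s + h) := by exact_mod_cast hkey
  have hcardR : (μ.card : ℝ) = μ.rowLen 0 + k := by exact_mod_cast hk.symm
  have hhR : (1 : ℝ) ≤ h := by exact_mod_cast hh
  rw [sum_congr rfl fun i _ => show (μ.card : ℝ) * ((2 * i + (s - j) : ℕ) : ℝ) - k * (s + i + 1) =
      (2 * μ.card - k) * i + (μ.card * ((s : ℝ) - j) - k * (s + 1)) by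
        push_cast [Nat.cast_sub hsj]; ring,
    sum_add_distrib, ← mul_sum, sum_const, card_range, nsmul_eq_mul, hgauss]
  rw [hcardR] at hkeyR ⊢
  -- with `w = μ.rowLen 0` and `n = μ.card`, twice the sum is
  -- `k h (h - 1) + 2 h (w (s + h) - (j + 1) n)`
  nlinarith [mul_nonneg (by positivity : (0 : ℝ) ≤ k * h) (sub_nonneg.2 hhR),
    mul_nonneg (by positivity : (0 : ℝ) ≤ h) (sub_nonneg.2 hkeyR)]

theorem sum_filter_le_colTab_nonneg {k : ℕ} (hk : μ.rowLen 0 + k = μ.card) (r : ℕ) :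
    0 ≤ ∑ c ∈ μ.cells with r ≤ colTab μ c,
      ((μ.card : ℝ) * colTabGap μ c - k * colTab μ c) := by
  rw [sum_filter, μ.sum_cells]
  refine sum_nonneg fun j hj => ?_
  have hj : j < μ.rowLen 0 := mem_range.1 hj
  have hcolTab : ∀ i ∈ range (μ.colLen j), colTab μ (i, j) = μ.colPrefixSum j + i + 1 :=
    fun i hi => colTab_mk μ (μ.mk_mem_iff.2 ⟨hj, mem_range.1 hi⟩)
  rw [sum_congr rfl fun i hi => by rw [hcolTab i hi], ← sum_filter]
  refine sum_filter_nonneg_of_monotone (fun a b hab => ?_)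
    (by exact_mod_cast sum_colTabGap_column_nonneg μ hk hj) fun a b hab h => h.trans (by omega)
  have habR : (a : ℝ) ≤ b := by exact_mod_cast hab
  have hkn : (k : ℝ) ≤ μ.card := by exact_mod_cast (hk ▸ Nat.le_add_left k _)
  simp only [colTabGap]
  push_cast
  nlinarith

theorem mul_Nalpha_le_card_mul_colTabGapSum {α : ℝ} (hα : 1 ≤ α) {k : ℕ}
    (hk : μ.rowLen 0 + k = μ.card) : k * Nalpha α μ.card ≤ μ.card * colTabGapSum μ α := by
  have habel := sum_mul_nonneg_of_sum_filter_le_nonneg μ.cells (colTab μ)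
    (monotone_natCast_rpow (sub_nonneg.2 hα)) (Real.rpow_nonneg (Nat.cast_nonneg 0) _) _
    (sum_filter_le_colTab_nonneg μ hk)
  rw [Nalpha_eq_sum_colTab, colTabGapSum, mul_sum, mul_sum, ← sub_nonneg, ← sum_sub_distrib]
  exact habel.trans_eq (sum_congr rfl fun c _ => by ring)

theorem mul_Nalpha_sub_one_le_card_mul_colTabGapSum {α : ℝ} (hα : 1 ≤ α) {k : ℕ}
    (hk : μ.rowLen 0 + k = μ.card) (h2k : 2 * k ≤ μ.card) :
    k * (μ.card - k) * Nalpha (α - 1) μ.card ≤ μ.card * colTabGapSum μ α := by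
  set f : ℕ → ℝ := fun m => (m : ℝ) ^ (α - 1)
  set φ : ℕ → ℝ := fun m => (min (m / 2) k : ℕ)
  have hf : Monotone f := monotone_natCast_rpow (sub_nonneg.2 hα)
  have hφ : Monotone φ := fun a b hab => by
    simp only [φ]
    exact_mod_cast min_le_min_right k (Nat.div_le_div_right hab)
  have hφsum : ∑ m ∈ Icc 1 μ.card, φ m = k * (μ.card - k) := by
    simp only [φ]
    rw [← Nat.cast_sum, sum_Icc_min_div_two k h2k, Nat.cast_mul, Nat.cast_sub (by omega)]
  have hgap : ∑ m ∈ Icc 1 μ.card, φ m * f m ≤ colTabGapSum μ α := by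
    rw [← sum_colTab μ fun m => φ m * f m, colTabGapSum]
    refine sum_le_sum fun c hc =>
      mul_le_mul_of_nonneg_right ?_ (Real.rpow_nonneg (Nat.cast_nonneg _) _)
    simp only [φ]
    exact_mod_cast min_colTab_div_two_le_colTabGap μ hk hc
  have hcheb := ((hφ.monovary hf).monovaryOn (Icc 1 μ.card)).sum_mul_sum_le_card_mul_sum
  rw [hφsum, Nat.card_Icc, Nat.add_sub_cancel] at hcheb
  calc k * (μ.card - k) * Nalpha (α - 1) μ.card
      ≤ μ.card * ∑ m ∈ Icc 1 μ.card, φ m * f m := hcheb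
    _ ≤ μ.card * colTabGapSum μ α := by gcongr

end ColumnTableau

/-- Eigenvalue bounds for biased shuffles with `α ≥ 1`: if `λ ⊢ n` has first part
`λ₁ = n − k`, then `eig_α(T_λ^↓) ≤ 1 − k/n`; moreover, if `k ≤ n/4` then
`eig_α(T_λ^↓) ≤ 1 − k·(n−k)·N_{α−1}(n)/(n·N_α(n))`. -/
theorem eigb_colTab_bound_large_alpha (α : ℝ) (hα : 1 ≤ α) (n : ℕ)
    (μ : YoungDiagram) (hcard : μ.card = n) (k : ℕ) (hk : μ.rowLen 0 + k = n) :
    eigb α μ (colTab μ) ≤ 1 - (k : ℝ) / (n : ℝ) ∧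
      ((k : ℝ) ≤ (n : ℝ) / 4 →
        eigb α μ (colTab μ) ≤
          1 - ((k : ℝ) * ((n : ℝ) - (k : ℝ)) * Nalpha (α - 1) n) / ((n : ℝ) * Nalpha α n)) := by
  subst hcard
  obtain hn | hn := Nat.eq_zero_or_pos μ.card
  · obtain rfl : k = 0 := by omega
    simp [eigb, Finset.card_eq_zero.1 hn]
  have hN := Nalpha_pos α hn
  have hnR : (0 : ℝ) < μ.card := by exact_mod_cast hn
  rw [eigb_colTab_eq μ α hn, ← mul_div_mul_left (colTabGapSum μ α) _ hnR.ne']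
  refine ⟨?_, fun hk4 => ?_⟩
  · rw [← mul_div_mul_right (k : ℝ) _ hN.ne']
    gcongr 1 - ?_ / _
    exact mul_Nalpha_le_card_mul_colTabGapSum μ hα hk
  · have h2k : 2 * k ≤ μ.card := by exact_mod_cast (by linarith : (2 * k : ℝ) ≤ μ.card)
    gcongr 1 - ?_ / _
    exact mul_Nalpha_sub_one_le_card_mul_colTabGapSum μ hα hk h2k
end

section
/- Diagonal-tableau domination for α ≥ 1: let α ≥ 1 and let λ ⊢ n be a partition with first part λ₁ = n − k, where 1 ≤ n − k. Then eig_α(T_λ^↓) ≤ eig_α(T_{(n−k,⋆)}^↘). -/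
open scoped BigOperators

/-- The partition `(n−k,⋆)` of `n` (for `n−k ≥ 1`): `⌊n/(n−k)⌋` rows of size `n−k`,
followed (when `n−k` does not divide `n`) by a final row of size `n mod (n−k)`.
Cell `(i,j)` (0-indexed) belongs to the diagram iff `j < n−k` and `i(n−k)+j < n`. -/
def nkStar (n k : ℕ) : YoungDiagram where
  cells := (Finset.range n ×ˢ Finset.range n).filter
      (fun c => c.2 < n - k ∧ c.1 * (n - k) + c.2 < n)
  isLowerSet := by
    rintro ⟨i₁, j₁⟩ ⟨i₂, j₂⟩ ⟨h1, h2⟩ hmem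
    simp only [Finset.mem_coe, Finset.mem_filter, Finset.mem_product, Finset.mem_range]
      at hmem ⊢
    obtain ⟨⟨hi, hj⟩, hjk, hsum⟩ := hmem
    refine ⟨⟨lt_of_le_of_lt h1 hi, lt_of_le_of_lt h2 hj⟩, lt_of_le_of_lt h2 hjk, ?_⟩
    exact lt_of_le_of_lt (Nat.add_le_add (Nat.mul_le_mul h1 (le_refl (n - k))) h2) hsum

/-- The diagonal-reading tableau `T_λ^↘`: entries `1,…,n` filled in increasing order of
the diagonal index `j−i`, each diagonal filled from top to bottom.  Explicitly,
`T_λ^↘(i,j) = #{(i',j')∈λ : j'−i' < j−i} + #{(i',j')∈λ : j'−i' = j−i ∧ i' ≤ i}`. -/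
def diagTab (μ : YoungDiagram) : ℕ × ℕ → ℕ := fun c =>
  (μ.cells.filter (fun c' =>
      ((c'.2 : ℤ) - (c'.1 : ℤ) < (c.2 : ℤ) - (c.1 : ℤ)) ∨
        ((c'.2 : ℤ) - (c'.1 : ℤ) = (c.2 : ℤ) - (c.1 : ℤ) ∧ c'.1 ≤ c.1))).card

/-!
Abel summation in the entries gives, with `g m = m ^ (α - 1)` and `w c = j - i + 1`,
`∑ w c * g (T c) = g 0 * ∑ w c + ∑ₘ (g (m+1) - g m) * ∑_{T c > m} w c`, and the increments
`g (m+1) - g m` are nonnegative for `α ≥ 1`. It therefore suffices to compare, for each `m`,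
the weights of the `n - m` cells carrying entries `> m`. In `(n-k,⋆)` filled diagonally these
are the `n - m` cells of largest content, so by a layer-cake argument the comparison follows
from `#{c ∈ λ | content c ≥ t} ≤ #{c ∈ (n-k,⋆) | content c ≥ t}` for all `t`. That count
inequality holds because the row partial sums of `(n-k,⋆)` dominate those of any `λ` with
`λ₁ ≤ n - k`. Of `T_λ^↓` only the fact that it is a standard filling is used.
-/

open Finset

section TopSums

variable {ι : Type*}

theorem sum_toNat_sub_eq_sum_card_filter (s : Finset ι) (f : ι → ℤ) (x : ℤ) {K : ℤ}
    (hK : ∀ c ∈ s, f c ≤ K) :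
    ∑ c ∈ s, (f c - x).toNat = ∑ t ∈ Ioc x K, #{c ∈ s | t ≤ f c} := by
  have hcell : ∀ c ∈ s, (f c - x).toNat = #{t ∈ Ioc x K | t ≤ f c} := by
    intro c hc
    rw [← Int.card_Ioc]
    congr 1
    ext t
    simp only [mem_Ioc, mem_filter]
    have := hK c hc
    omega
  rw [sum_congr rfl hcell]
  simp only [card_filter]
  exact sum_comm

theorem sum_toNat_sub_le_of_card_filter_le {s s' : Finset ι} {f : ι → ℤ}
    (hcount : ∀ t, #{c ∈ s | t ≤ f c} ≤ #{c ∈ s' | t ≤ f c}) (x : ℤ) :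
    ∑ c ∈ s, (f c - x).toNat ≤ ∑ c ∈ s', (f c - x).toNat := by
  classical
  obtain ⟨K, hK⟩ := ((s ∪ s').image f).exists_le
  have hbound : ∀ c ∈ s ∪ s', f c ≤ K := fun c hc => hK _ (mem_image_of_mem f hc)
  rw [sum_toNat_sub_eq_sum_card_filter s f x fun c hc => hbound c (mem_union_left _ hc),
    sum_toNat_sub_eq_sum_card_filter s' f x fun c hc => hbound c (mem_union_right _ hc)]
  exact sum_le_sum fun t _ => hcount t

theorem sum_le_sum_of_card_filter_le {s s' A B : Finset ι} {f : ι → ℤ}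
    (hcount : ∀ t, #{c ∈ s | t ≤ f c} ≤ #{c ∈ s' | t ≤ f c})
    (hA : A ⊆ s) (hB : B ⊆ s') (hAB : #A = #B)
    (hBtop : ∀ c ∈ B, ∀ c' ∈ s', c' ∉ B → f c' ≤ f c) :
    ∑ c ∈ A, f c ≤ ∑ c ∈ B, f c := by
  classical
  rcases B.eq_empty_or_nonempty with rfl | hBne
  · rw [card_empty, card_eq_zero] at hAB
    simp [hAB]
  obtain ⟨b, hb, hbmin⟩ := B.exists_min_image f hBne
  have htoNat : ∀ c ∈ s', ((f c - f b).toNat : ℤ) = if c ∈ B then f c - f b else 0 := by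
    intro c hc
    split_ifs with hcB
    · exact Int.toNat_of_nonneg (sub_nonneg.2 (hbmin c hcB))
    · simp [hBtop b hb c hc hcB]
  calc ∑ c ∈ A, f c ≤ ∑ c ∈ A, (f b + (f c - f b).toNat) :=
        sum_le_sum fun c _ => by linarith [Int.self_le_toNat (f c - f b)]
    _ = #A * f b + ((∑ c ∈ A, (f c - f b).toNat : ℕ) : ℤ) := by
        rw [sum_add_distrib, sum_const, nsmul_eq_mul]; push_cast; rfl
    _ ≤ #B * f b + ((∑ c ∈ s', (f c - f b).toNat : ℕ) : ℤ) := by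
        rw [hAB]
        have := (sum_le_sum_of_subset (f := fun c => (f c - f b).toNat) hA).trans
          (sum_toNat_sub_le_of_card_filter_le hcount (f b))
        gcongr
    _ = ∑ c ∈ B, f c := by
        push_cast
        rw [sum_congr rfl htoNat, ← sum_filter, filter_mem_eq_inter, inter_eq_right.2 hB,
          sum_sub_distrib, sum_const, nsmul_eq_mul]
        ring

end TopSums

section Abel

variable {ι R : Type*}

theorem sum_mul_eq_sum_range_sub_mul [CommRing R] (s : Finset ι) (w : ι → R) (g : ℕ → R)
    (T : ι → ℕ) {N : ℕ} (hT : ∀ c ∈ s, T c ≤ N) :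
    ∑ c ∈ s, w c * g (T c) =
      g 0 * ∑ c ∈ s, w c +
        ∑ m ∈ range N, (g (m + 1) - g m) * ∑ c ∈ s with m < T c, w c := by
  have hcell : ∀ c ∈ s, w c * g (T c) =
      g 0 * w c + ∑ m ∈ range N, (g (m + 1) - g m) * if m < T c then w c else 0 := by
    intro c hc
    have hrange : (range N).filter (· < T c) = range (T c) := by
      ext m; simp only [mem_filter, mem_range]; have := hT c hc; omega
    simp only [mul_ite, mul_zero]
    rw [← sum_filter, hrange, ← sum_mul, sum_range_sub]
    ring
  rw [sum_congr rfl hcell, sum_add_distrib, mul_sum, sum_comm]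
  simp only [mul_sum, sum_filter]

theorem sum_mul_le_sum_mul_of_sum_filter_le [CommRing R] [PartialOrder R] [IsOrderedRing R]
    {s s' : Finset ι} {w : ι → R} {g : ℕ → R} {T T' : ι → ℕ} {N : ℕ}
    (hg : Monotone g) (hg0 : 0 ≤ g 0)
    (hT : ∀ c ∈ s, T c ∈ Icc 1 N) (hT' : ∀ c ∈ s', T' c ∈ Icc 1 N)
    (h : ∀ m, ∑ c ∈ s with m < T c, w c ≤ ∑ c ∈ s' with m < T' c, w c) :
    ∑ c ∈ s, w c * g (T c) ≤ ∑ c ∈ s', w c * g (T' c) := by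
  rw [sum_mul_eq_sum_range_sub_mul s w g T fun c hc => (mem_Icc.1 (hT c hc)).2,
    sum_mul_eq_sum_range_sub_mul s' w g T' fun c hc => (mem_Icc.1 (hT' c hc)).2]
  have h0 := h 0
  rw [filter_true_of_mem (p := fun c => 0 < T c) fun c hc => (mem_Icc.1 (hT c hc)).1,
    filter_true_of_mem (p := fun c => 0 < T' c) fun c hc => (mem_Icc.1 (hT' c hc)).1] at h0
  refine add_le_add (mul_le_mul_of_nonneg_left h0 hg0) (sum_le_sum fun m _ => ?_)
  exact mul_le_mul_of_nonneg_left (h m) (sub_nonneg.2 (hg m.le_succ))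

end Abel

section Rank

variable {ι β : Type*} [LinearOrder β]

def rankBy (s : Finset ι) (key : ι → β) (c : ι) : ℕ := #{c' ∈ s | key c' ≤ key c}

variable {s : Finset ι} {key : ι → β}

theorem rankBy_mem_Icc {c : ι} (hc : c ∈ s) : rankBy s key c ∈ Icc 1 #s :=
  mem_Icc.2 ⟨card_pos.2 ⟨c, mem_filter.2 ⟨hc, le_rfl⟩⟩, card_filter_le _ _⟩

theorem rankBy_lt_rankBy {c c' : ι} (hc' : c' ∈ s) (h : key c < key c') :
    rankBy s key c < rankBy s key c' := by
  refine card_lt_card ⟨monotone_filter_right _ fun _ _ ha => ha.trans h.le, fun hsub => ?_⟩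
  have := (mem_filter.1 (hsub (mem_filter.2 ⟨hc', le_rfl⟩))).2
  exact this.not_gt h

theorem injOn_rankBy (hkey : Set.InjOn key s) : Set.InjOn (rankBy s key) s := by
  intro c hc c' hc' h
  by_contra hne
  rcases lt_or_gt_of_ne (hkey.ne hc hc' hne) with hlt | hlt
  · exact (rankBy_lt_rankBy hc' hlt).ne h
  · exact (rankBy_lt_rankBy hc hlt).ne' h

theorem image_rankBy [DecidableEq ι] (hkey : Set.InjOn key s) :
    s.image (rankBy s key) = Icc 1 #s := by
  refine eq_of_subset_of_card_le (fun v hv => ?_) ?_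
  · obtain ⟨c, hc, rfl⟩ := mem_image.1 hv
    exact rankBy_mem_Icc hc
  · rw [card_image_of_injOn (injOn_rankBy hkey), Nat.card_Icc, Nat.add_sub_cancel]

theorem card_filter_lt_rankBy (hkey : Set.InjOn key s) (m : ℕ) :
    #{c ∈ s | m < rankBy s key c} = #s - m := by
  classical
  rw [← card_image_of_injOn ((injOn_rankBy hkey).mono (filter_subset _ s)), ← filter_image,
    image_rankBy hkey]
  have : (Icc 1 #s).filter (m < ·) = Ioc m #s := by
    ext v; simp only [mem_filter, mem_Icc, mem_Ioc]; omega
  rw [this, Nat.card_Ioc]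

end Rank

def content (c : ℕ × ℕ) : ℤ := c.2 - c.1

theorem colTab_eq_rankBy (μ : YoungDiagram) :
    colTab μ = rankBy μ.cells fun c => toLex (c.2, c.1) := by
  ext c
  simp only [colTab, rankBy, Prod.Lex.toLex_le_toLex]

theorem diagTab_eq_rankBy (μ : YoungDiagram) :
    diagTab μ = rankBy μ.cells fun c => toLex (content c, c.1) := by
  ext c
  simp only [diagTab, rankBy, content, Prod.Lex.toLex_le_toLex]

theorem colTab_mem_Icc {μ : YoungDiagram} {c : ℕ × ℕ} (hc : c ∈ μ.cells) :
    colTab μ c ∈ Icc 1 μ.card :=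
  colTab_eq_rankBy μ ▸ rankBy_mem_Icc hc

theorem diagTab_mem_Icc {μ : YoungDiagram} {c : ℕ × ℕ} (hc : c ∈ μ.cells) :
    diagTab μ c ∈ Icc 1 μ.card :=
  diagTab_eq_rankBy μ ▸ rankBy_mem_Icc hc

theorem card_filter_lt_colTab (μ : YoungDiagram) (m : ℕ) :
    #{c ∈ μ.cells | m < colTab μ c} = μ.card - m := by
  rw [colTab_eq_rankBy, card_filter_lt_rankBy]
  intro c _ c' _ h
  simp only [toLex_inj, Prod.mk.injEq] at h
  exact Prod.ext h.2 h.1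

theorem card_filter_lt_diagTab (μ : YoungDiagram) (m : ℕ) :
    #{c ∈ μ.cells | m < diagTab μ c} = μ.card - m := by
  rw [diagTab_eq_rankBy, card_filter_lt_rankBy]
  intro c _ c' _ h
  simp only [toLex_inj, Prod.mk.injEq, content] at h
  exact Prod.ext h.2 (by omega)

theorem diagTab_lt_diagTab {μ : YoungDiagram} {c c' : ℕ × ℕ} (hc' : c' ∈ μ.cells)
    (h : content c < content c') : diagTab μ c < diagTab μ c' := by
  rw [diagTab_eq_rankBy]
  exact rankBy_lt_rankBy hc' (Prod.Lex.toLex_lt_toLex.2 (Or.inl h))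

namespace YoungDiagram

theorem card_filter_fst_lt_and (μ : YoungDiagram) (m : ℕ) (P : ℕ × ℕ → Prop)
    [DecidablePred P] :
    #{c ∈ μ.cells | c.1 < m ∧ P c} = ∑ i ∈ range m, #{c ∈ μ.row i | P c} := by
  rw [card_eq_sum_card_fiberwise fun c hc => mem_range.2 (mem_filter.1 hc).2.1]
  refine sum_congr rfl fun i hi => congrArg card ?_
  ext c
  simp only [row, mem_filter, mem_range] at hi ⊢
  grind

theorem card_filter_fst_lt (μ : YoungDiagram) (m : ℕ) :
    #{c ∈ μ.cells | c.1 < m} = ∑ i ∈ range m, μ.rowLen i := by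
  simpa [← rowLen_eq_card] using card_filter_fst_lt_and μ m fun _ => True

theorem exists_forall_lt_rowLen_iff (μ : YoungDiagram) {u : ℕ → ℕ} (hu : Monotone u) :
    ∃ m, ∀ i, u i < μ.rowLen i ↔ i < m := by
  classical
  have hex : ∃ i, μ.rowLen i ≤ u i := by
    refine ⟨μ.colLen 0, (Nat.eq_zero_of_not_pos fun h => ?_).trans_le (Nat.zero_le _)⟩
    exact (mem_iff_lt_colLen.1 (mem_iff_lt_rowLen.2 h)).false
  refine ⟨Nat.find hex, fun i => ⟨fun h => not_le.1 fun hi => ?_, fun hi => ?_⟩⟩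
  · exact h.not_ge ((μ.rowLen_anti _ _ hi).trans ((Nat.find_spec hex).trans (hu hi)))
  · exact not_le.1 (Nat.find_min hex hi)

theorem card_row_filter_le_content (μ : YoungDiagram) (i : ℕ) (t : ℤ) :
    #{c ∈ μ.row i | t ≤ content c} = μ.rowLen i - (t + i).toNat := by
  have : {c ∈ ({i} : Finset ℕ) ×ˢ range (μ.rowLen i) | t ≤ content c} =
      {i} ×ˢ Ico (t + i).toNat (μ.rowLen i) := by
    ext ⟨a, b⟩
    simp only [mem_filter, mem_product, mem_singleton, mem_range, mem_Ico]
    unfold content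
    omega
  rw [row_eq_prod, this, card_product, card_singleton, one_mul, Nat.card_Ico]

end YoungDiagram

theorem mem_nkStar {n k : ℕ} {c : ℕ × ℕ} :
    c ∈ (nkStar n k).cells ↔ c.2 < n - k ∧ c.1 * (n - k) + c.2 < n := by
  simp only [nkStar, mem_filter, mem_product, mem_range]
  refine ⟨And.right, fun h => ⟨⟨?_, by omega⟩, h⟩⟩
  have := Nat.le_mul_of_pos_right c.1 (show 0 < n - k by omega)
  omega

theorem card_filter_fst_lt_nkStar (n k m : ℕ) :
    #{c ∈ (nkStar n k).cells | c.1 < m} = min n (m * (n - k)) := by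
  rw [← card_range (min n (m * (n - k)))]
  refine card_nbij' (fun c => c.1 * (n - k) + c.2) (fun r => (r / (n - k), r % (n - k)))
    ?_ ?_ ?_ ?_ <;>
  simp only [Set.MapsTo, Set.LeftInvOn, Set.RightInvOn, coe_filter, coe_range,
    Set.mem_Iio, Set.mem_ofPred_eq, mem_nkStar, lt_min_iff] <;>
  generalize n - k = q
  · rintro ⟨i, j⟩ ⟨⟨hj, hij⟩, him⟩
    have : (i + 1) * q ≤ m * q := Nat.mul_le_mul_right q him
    constructor <;> nlinarith
  · intro r ⟨hrn, hrm⟩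
    have hq : 0 < q := Nat.pos_of_ne_zero (by rintro rfl; simp at hrm)
    have := Nat.div_add_mod' r q
    exact ⟨⟨Nat.mod_lt r hq, by omega⟩, (Nat.div_lt_iff_lt_mul hq).2 hrm⟩
  · rintro ⟨i, j⟩ ⟨⟨hj, -⟩, -⟩
    have hq : 0 < q := by omega
    refine Prod.ext ?_ ?_
    · dsimp only
      rw [Nat.add_comm, Nat.add_mul_div_right _ _ hq, Nat.div_eq_of_lt hj, zero_add]
    · dsimp only
      rw [Nat.add_comm, Nat.add_mul_mod_self_right, Nat.mod_eq_of_lt hj]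
  · intro r _
    exact Nat.div_add_mod' r q

theorem card_nkStar {n k : ℕ} (hnk : 0 < n - k) : (nkStar n k).card = n := by
  have := card_filter_fst_lt_nkStar n k n
  rwa [filter_true_of_mem, min_eq_left (Nat.le_mul_of_pos_right n hnk)] at this
  intro c hc
  have := Nat.le_mul_of_pos_right c.1 hnk
  have := mem_nkStar.1 hc
  omega

theorem card_filter_le_content_le_nkStar {μ : YoungDiagram} {n k : ℕ} (hcard : μ.card = n)
    (hrow : μ.rowLen 0 ≤ n - k) (t : ℤ) :
    #{c ∈ μ.cells | t ≤ content c} ≤ #{c ∈ (nkStar n k).cells | t ≤ content c} := by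
  set ν := nkStar n k
  set u : ℕ → ℕ := fun i => (t + i).toNat
  -- Row `i` has exactly `u i` cells of content `< t` (or fewer, if it is shorter); the rows
  -- of `μ` longer than that are the first `m`, so only on those rows is `rowLen i - u i` positive.
  obtain ⟨m, hm⟩ := μ.exists_forall_lt_rowLen_iff (u := u) fun a b hab => by dsimp [u]; omega
  have hrowSum (D : YoungDiagram) :
      #{c ∈ D.cells | c.1 < m ∧ t ≤ content c} = ∑ i ∈ range m, (D.rowLen i - u i) := by
    rw [D.card_filter_fst_lt_and]
    exact sum_congr rfl fun i _ => D.card_row_filter_le_content i t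
  have hμ : #{c ∈ μ.cells | t ≤ content c} = ∑ i ∈ range m, (μ.rowLen i - u i) := by
    rw [← hrowSum]
    refine congrArg card (filter_congr fun c hc => ⟨fun h => ⟨?_, h⟩, And.right⟩)
    have := YoungDiagram.mem_iff_lt_rowLen.1 hc
    have hu : u c.1 = (t + c.1).toNat := rfl
    rw [← hm]
    unfold content at h
    omega
  have hν : ∑ i ∈ range m, (ν.rowLen i - u i) ≤ #{c ∈ ν.cells | t ≤ content c} :=
    hrowSum ν ▸ card_le_card (monotone_filter_right _ fun _ _ h => h.2)
  have hrows : ∑ i ∈ range m, μ.rowLen i ≤ ∑ i ∈ range m, ν.rowLen i := by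
    rw [← μ.card_filter_fst_lt, ← ν.card_filter_fst_lt, card_filter_fst_lt_nkStar]
    refine le_min ((card_filter_le _ _).trans hcard.le) ?_
    rw [μ.card_filter_fst_lt]
    simpa using sum_le_card_nsmul (range m) μ.rowLen (n - k) fun i _ =>
      (μ.rowLen_anti 0 i i.zero_le).trans hrow
  have hμu : ∑ i ∈ range m, (μ.rowLen i - u i) + ∑ i ∈ range m, u i =
      ∑ i ∈ range m, μ.rowLen i := by
    rw [← sum_add_distrib]
    exact sum_congr rfl fun i hi => Nat.sub_add_cancel ((hm i).2 (mem_range.1 hi)).le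
  have hνu : ∑ i ∈ range m, ν.rowLen i ≤
      ∑ i ∈ range m, (ν.rowLen i - u i) + ∑ i ∈ range m, u i := by
    rw [← sum_add_distrib]
    exact sum_le_sum fun i _ => le_tsub_add
  omega

theorem sum_filter_lt_colTab_le_diagTab {μ : YoungDiagram} {n k : ℕ} (hcard : μ.card = n)
    (hrow : μ.rowLen 0 ≤ n - k) (hnk : 0 < n - k) (m : ℕ) :
    ∑ c ∈ μ.cells with m < colTab μ c, (content c + 1) ≤
      ∑ c ∈ (nkStar n k).cells with m < diagTab (nkStar n k) c, (content c + 1) := by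
  refine sum_le_sum_of_card_filter_le (fun t => ?_) (filter_subset _ _) (filter_subset _ _) ?_ ?_
  · simpa only [← sub_le_iff_le_add] using card_filter_le_content_le_nkStar hcard hrow (t - 1)
  · rw [card_filter_lt_colTab, card_filter_lt_diagTab, hcard, card_nkStar hnk]
  · intro c hc c' hc' hc'B
    simp only [mem_filter, not_and, not_lt] at hc hc'B
    have : content c' ≤ content c :=
      not_lt.1 fun h => (diagTab_lt_diagTab hc' h).not_ge ((hc'B hc').trans hc.2.le)
    omega

/-- Diagonal-tableau domination for `α ≥ 1`: if `λ ⊢ n` has first part `λ₁ = n − k`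
with `1 ≤ n − k`, then `eig_α(T_λ^↓) ≤ eig_α(T_{(n−k,⋆)}^↘)`. -/
theorem eigb_colTab_le_diagTab (α : ℝ) (hα : 1 ≤ α) (n k : ℕ)
    (μ : YoungDiagram) (hcard : μ.card = n) (hk : μ.rowLen 0 + k = n) (hnk : 1 ≤ n - k) :
    eigb α μ (colTab μ) ≤ eigb α (nkStar n k) (diagTab (nkStar n k)) := by
  have hν : (nkStar n k).card = n := card_nkStar hnk
  have hw : ∀ c : ℕ × ℕ, (c.2 : ℝ) - c.1 + 1 = ((content c + 1 : ℤ) : ℝ) := fun c => by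
    push_cast [content]; ring
  unfold eigb
  rw [hcard, hν]
  refine mul_le_mul_of_nonneg_left ?_ (inv_nonneg.2 (sum_nonneg fun j _ => by positivity))
  simp only [hw]
  refine sum_mul_le_sum_mul_of_sum_filter_le (g := fun m : ℕ => (m : ℝ) ^ (α - 1)) (N := n)
    (fun a b hab => ?_) (by positivity) (fun c hc => ?_) (fun c hc => ?_) fun m => ?_
  · exact Real.rpow_le_rpow (Nat.cast_nonneg a) (Nat.cast_le.2 hab) (by linarith)
  · exact hcard ▸ colTab_mem_Icc hc
  · simpa only [hν] using diagTab_mem_Icc hc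
  · exact_mod_cast sum_filter_lt_colTab_le_diagTab hcard (by omega) hnk m
end

section
/- Separation-distance upper bound for the one-sided transposition shuffle: for every n ≥ 1, every real c > 0, and every natural number t with t ≥ n·log n + c·n, we have sep(OST_n^t) = max_{σ∈S_n} (1 − n!·OST_n^t(σ)) ≤ e^{−c}. -/
open scoped BigOperators

/-- The one-sided transposition shuffle on `S_n`:
`OST n σ = 1/(n·j)` if `σ = (i j)` with `1 ≤ i < j ≤ n` (here positions are the
elements of `Fin n`, so position `j` carries weight `1/(n(j+1))`), `OST n 1 = H_n/n`,
and `0` otherwise.  The convention `(i i) = e` makes the identity mass `H_n/n`. -/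
noncomputable def OST (n : ℕ) : Equiv.Perm (Fin n) → ℝ := fun σ =>
  ∑ j : Fin n, ∑ i : Fin n,
    if i ≤ j ∧ σ = Equiv.swap i j then ((n : ℝ) * (((j : ℕ) : ℝ) + 1))⁻¹ else 0

/-- Convolution of two distributions on `S_n`: `(P ⋆ Q)(g) = ∑_h P(g h⁻¹) Q(h)`. -/
noncomputable def convol {n : ℕ} (P Q : Equiv.Perm (Fin n) → ℝ) :
    Equiv.Perm (Fin n) → ℝ :=
  fun g => ∑ h : Equiv.Perm (Fin n), P (g * h⁻¹) * Q h

/-- `convPow P t` is the `t`-fold convolution `P^t` of `P` with itself. -/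
noncomputable def convPow {n : ℕ} (P : Equiv.Perm (Fin n) → ℝ) :
    ℕ → Equiv.Perm (Fin n) → ℝ
  | 0 => fun g => if g = 1 then 1 else 0
  | t + 1 => convol P (convPow P t)

/-- The separation distance of `P` from the uniform distribution on `S_n`:
`sep(P) = max_{σ∈S_n} (1 − n!·P(σ))`, written as a supremum over `S_n`. -/
noncomputable def sepDist {n : ℕ} (P : Equiv.Perm (Fin n) → ℝ) : ℝ :=
  ⨆ σ : Equiv.Perm (Fin n), (1 - (Nat.factorial n : ℝ) * P σ)

/-!
Convolving with `OST_n` is the operator `n⁻¹ ∑ⱼ Aⱼ`, where `Aⱼ` averages `f ↦ f ((i j) * ·)` over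
`i ≤ j`. The `Aⱼ` commute, so `OST_nᵗ` is the average over words `w : Fin t → Fin n` of
`∏ₓ A_{w x}` applied to the point mass at the identity, and in a word that uses every letter the
factors `A₀, A₁, …, A_{n-1}` may be applied first. These turn the point mass successively into the
uniform distributions on `S₁ ⊆ S₂ ⊆ ⋯ ⊆ Sₙ`; the remaining factors are Markov operators and keep
the uniform distribution. Hence `n! · OST_nᵗ(σ)` is at least the proportion of words using every
letter, and `sep(OST_nᵗ)` is at most the proportion of words missing a letter, which is at most
`n (1 - 1/n)ᵗ ≤ e^{-c}`.
-/

open Equiv Finset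
open scoped IsMulCommutative Nat

def markovOps (X : Type*) : Submonoid (Module.End ℝ (X → ℝ)) where
  carrier := {A | (∀ f, 0 ≤ f → 0 ≤ A f) ∧ A 1 = 1}
  mul_mem' hA hB := ⟨fun f hf => hA.1 _ (hB.1 f hf), by simp [hA.2, hB.2]⟩
  one_mem' := ⟨fun _ hf => hf, rfl⟩

lemma markovOps.apply_const {X : Type*} {A : Module.End ℝ (X → ℝ)} (hA : A ∈ markovOps X)
    (c : ℝ) : A (fun _ => c) = fun _ => c := by
  have hc : (fun _ => c) = c • (1 : X → ℝ) := by ext; simp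
  rw [hc, map_smul, hA.2]

lemma prod_comp_eq_prod_mul_prod_pow_of_surjective {M ι α : Type*} [CommMonoid M] [Fintype α]
    [Fintype ι] [DecidableEq ι] (a : ι → M) {w : α → ι} (hw : Function.Surjective w) :
    ∏ x, a (w x) = (∏ j, a j) * ∏ j, a j ^ (#{x | w x = j} - 1) := by
  rw [← prod_mul_distrib, ← prod_fiberwise' univ w a]
  refine prod_congr rfl fun j _ => ?_
  obtain ⟨x, rfl⟩ := hw j
  have : 0 < #{y | w y = w x} := card_pos.2 ⟨x, by simp⟩
  rw [prod_const, ← pow_succ', Nat.sub_add_cancel this]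

lemma card_filter_not_surjective_le {α ι : Type*} [Fintype α] [DecidableEq α] [Fintype ι]
    [DecidableEq ι] :
    #{w : α → ι | ¬ Function.Surjective w}
      ≤ Fintype.card ι * (Fintype.card ι - 1) ^ Fintype.card α := by
  have hsub : ({w : α → ι | ¬ Function.Surjective w} : Finset _)
      ⊆ univ.biUnion fun j => Fintype.piFinset fun _ => univ.erase j := by
    intro w hw
    simp only [Function.Surjective, not_forall, mem_filter, mem_univ, true_and] at hw
    obtain ⟨j, hj⟩ := hw
    simp only [mem_biUnion, mem_univ, true_and, Fintype.mem_piFinset, mem_erase, ne_eq, and_true]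
    exact ⟨j, fun x hx => hj ⟨x, hx⟩⟩
  calc _ ≤ _ := card_le_card hsub
    _ ≤ _ := card_biUnion_le
    _ = _ := by simp [Fintype.card_piFinset]

lemma mul_one_sub_inv_pow_le_exp {x c : ℝ} (hx : 1 ≤ x) {t : ℕ}
    (ht : x * Real.log x + c * x ≤ t) : x * (1 - x⁻¹) ^ t ≤ Real.exp (-c) := by
  have hx0 : 0 < x := by linarith
  calc x * (1 - x⁻¹) ^ t ≤ x * Real.exp (-x⁻¹) ^ t := by
        gcongr
        · exact sub_nonneg.2 (inv_le_one_of_one_le₀ hx)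
        · exact Real.one_sub_le_exp_neg _
    _ = Real.exp (Real.log x + t * -x⁻¹) := by
        rw [Real.exp_add, Real.exp_log hx0, Real.exp_nat_mul]
    _ ≤ Real.exp (-c) := by
        have : Real.log x + c ≤ t / x := by rw [le_div_iff₀ hx0]; linarith
        gcongr
        rw [mul_neg, ← div_eq_mul_inv]
        linarith

variable {n : ℕ}

noncomputable def compMulLeft (π : Perm (Fin n)) : Module.End ℝ (Perm (Fin n) → ℝ) :=
  LinearMap.funLeft ℝ ℝ (π * ·)

lemma compMulLeft_apply (π : Perm (Fin n)) (f : Perm (Fin n) → ℝ) (g : Perm (Fin n)) :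
    compMulLeft π f g = f (π * g) := rfl

lemma compMulLeft_mul_compMulLeft (π ρ : Perm (Fin n)) :
    compMulLeft π * compMulLeft ρ = compMulLeft (ρ * π) := by
  ext f g
  simp [compMulLeft_apply, mul_assoc]

noncomputable def swapAvg (j : Fin n) : Module.End ℝ (Perm (Fin n) → ℝ) :=
  ((j : ℝ) + 1)⁻¹ • ∑ i ∈ Iic j, compMulLeft (swap i j)

lemma swapAvg_apply (j : Fin n) (f : Perm (Fin n) → ℝ) (g : Perm (Fin n)) :
    swapAvg j f g = ((j : ℝ) + 1)⁻¹ * ∑ i ∈ Iic j, f (swap i j * g) := by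
  simp [swapAvg, compMulLeft_apply]

lemma swapAvg_mem_markovOps (j : Fin n) : swapAvg j ∈ markovOps (Perm (Fin n)) := by
  refine ⟨fun f hf g => ?_, funext fun g => ?_⟩
  · rw [swapAvg_apply]
    exact mul_nonneg (by positivity) (sum_nonneg fun i _ => hf _)
  · rw [swapAvg_apply]
    simp only [Pi.one_apply, sum_const, Fin.card_Iic, nsmul_eq_mul, Nat.cast_add, Nat.cast_one,
      mul_one]
    field_simp

lemma swapAvg_commute (j k : Fin n) : Commute (swapAvg j) (swapAvg k) := by
  wlog hjk : j < k generalizing j k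
  · rcases (not_lt.1 hjk).lt_or_eq with h | rfl
    · exact (this k j h).symm
    · rfl
  have inner : ∀ i ∈ Iic j, ∑ l ∈ Iic k, compMulLeft (swap l k * swap i j)
      = ∑ l ∈ Iic k, compMulLeft (swap i j * swap l k) := by
    intro i hi
    have hik : i < k := lt_of_le_of_lt (mem_Iic.1 hi) hjk
    -- `(l k) (i j) = (i j) ((i j) l, k)`, and `l ↦ (i j) l` permutes `Iic k`
    rw [← (swap i j).sum_comp (Iic k) _ ?_]
    · refine sum_congr rfl fun l _ => ?_
      have hk : swap i j k = k := swap_apply_of_ne_of_ne hik.ne' hjk.ne'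
      conv_lhs => rw [← hk, swap_apply_apply, swap_inv, mul_assoc, swap_mul_self, mul_one]
    · intro x hx
      simp only [Set.mem_ofPred_eq] at hx
      simp only [coe_Iic, Set.mem_Iic]
      rcases swap_apply_ne_self_iff.1 hx with ⟨_, rfl | rfl⟩ <;> [exact hik.le; exact hjk.le]
  simp only [Commute, SemiconjBy, swapAvg, smul_mul_smul_comm, sum_mul_sum,
    compMulLeft_mul_compMulLeft]
  rw [mul_comm (((j : ℕ) : ℝ) + 1)⁻¹]
  congr 1
  rw [sum_congr rfl inner]
  exact sum_comm

lemma convol_eq_sum_smul (P f : Perm (Fin n) → ℝ) :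
    convol P f = ∑ π, P π • compMulLeft π⁻¹ f := by
  ext g
  simp only [convol, Finset.sum_apply, Pi.smul_apply, compMulLeft_apply, smul_eq_mul]
  exact Fintype.sum_equiv ((Equiv.inv _).trans (Equiv.mulLeft g)) _ _ (fun h => by simp)

noncomputable def ostOp (n : ℕ) : Module.End ℝ (Perm (Fin n) → ℝ) :=
  (n : ℝ)⁻¹ • ∑ j, swapAvg j

lemma sum_OST_smul_compMulLeft :
    ∑ π, OST n π • compMulLeft π⁻¹ = ostOp n := by
  simp only [OST, ostOp, swapAvg, sum_smul, ite_smul, zero_smul, smul_sum, smul_smul, ite_and]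
  rw [sum_comm]
  refine sum_congr rfl fun j _ => ?_
  rw [sum_comm]
  simp [sum_ite_eq', ← sum_filter, filter_ge_eq_Iic, mul_comm]

lemma convPow_OST (t : ℕ) :
    convPow (OST n) t = (ostOp n ^ t) (Pi.single 1 1) := by
  induction t with
  | zero => ext g; simp [convPow, Pi.single_apply]
  | succ t ih =>
    rw [pow_succ', Module.End.mul_apply, ← ih, ← sum_OST_smul_compMulLeft]
    simp only [convPow, convol_eq_sum_smul, LinearMap.sum_apply, LinearMap.smul_apply]

noncomputable def uniformPrefix (n m : ℕ) : Perm (Fin n) → ℝ := fun g =>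
  if ∀ x : Fin n, m ≤ (x : ℕ) → g x = x then (m ! : ℝ)⁻¹ else 0

lemma uniformPrefix_zero : uniformPrefix n 0 = Pi.single 1 1 := by
  ext g
  simp [uniformPrefix, Pi.single_apply, Perm.ext_iff]

lemma uniformPrefix_self : uniformPrefix n n = fun _ => (n ! : ℝ)⁻¹ := by
  ext g
  simp [uniformPrefix, Fin.is_lt, not_le.2]

lemma swapAvg_uniformPrefix (j : Fin n) :
    swapAvg j (uniformPrefix n j) = uniformPrefix n (j + 1) := by
  ext g
  rw [swapAvg_apply]
  by_cases hg : ∀ x : Fin n, (j : ℕ) + 1 ≤ x → g x = x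
  · have hgj : g j ≤ j := by
      by_contra! h
      exact h.ne' (g.injective (hg _ h))
    -- as `g` fixes every position `> j`, exactly one `i ≤ j`, namely `g j`, makes `swap i j * g`
    -- fix `j` as well
    have key : ∀ i, (∀ x : Fin n, (j : ℕ) ≤ x → (swap i j * g) x = x) ↔ i = g j := by
      intro i
      refine ⟨fun h => ?_, fun h x hx => ?_⟩
      · have := h j le_rfl
        rwa [Perm.mul_apply, swap_apply_eq_iff, swap_apply_right, eq_comm] at this
      · subst h
        rcases hx.eq_or_lt with hx | hx
        · rw [Fin.ext hx.symm, Perm.mul_apply, swap_apply_left]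
        · have hgx := hg x hx
          have hxj : x ≠ j := Fin.ne_of_val_ne hx.ne'
          rw [Perm.mul_apply, hgx,
            swap_apply_of_ne_of_ne (fun h => hxj (g.injective (hgx.trans h))) hxj]
    simp only [uniformPrefix, if_pos hg, key, sum_ite_eq', mem_Iic, hgj, if_true,
      Nat.factorial_succ]
    push_cast
    field_simp
  · obtain ⟨x, hx, hgx⟩ := not_forall₂.1 hg
    have key : ∀ i ∈ Iic j, ¬ ∀ y : Fin n, (j : ℕ) ≤ y → (swap i j * g) y = y := by
      intro i hi h
      have hij : (i : ℕ) ≤ j := Fin.le_def.1 (mem_Iic.1 hi)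
      have := h x (by omega)
      rw [Perm.mul_apply, swap_apply_eq_iff,
        swap_apply_of_ne_of_ne (Fin.ne_of_val_ne (by omega)) (Fin.ne_of_val_ne (by omega))] at this
      exact hgx this
    simp only [uniformPrefix, if_neg hg]
    rw [sum_eq_zero fun i hi => if_neg (key i hi), mul_zero]

variable (n) in
def swapAvgAlgebra : Subalgebra ℝ (Module.End ℝ (Perm (Fin n) → ℝ)) :=
  Algebra.adjoin ℝ (Set.range swapAvg)

instance : IsMulCommutative (swapAvgAlgebra n) :=
  Algebra.isMulCommutative_adjoin ℝ (by rintro _ ⟨j, rfl⟩ _ ⟨k, rfl⟩; exact swapAvg_commute j k)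

variable (n) in
def markovElems : Submonoid (swapAvgAlgebra n) :=
  (markovOps _).comap (swapAvgAlgebra n).val

noncomputable def swapAvgElem (j : Fin n) : swapAvgAlgebra n :=
  ⟨swapAvg j, Algebra.subset_adjoin ⟨j, rfl⟩⟩

lemma swapAvgElem_mem_markovElems (j : Fin n) : swapAvgElem j ∈ markovElems n :=
  swapAvg_mem_markovOps j

lemma prod_swapAvgElem_apply_single :
    ((∏ j, swapAvgElem j : swapAvgAlgebra n) : Module.End ℝ (Perm (Fin n) → ℝ)) (Pi.single 1 1)
      = fun _ => (n ! : ℝ)⁻¹ := by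
  let a : ℕ → swapAvgAlgebra n := fun m => if h : m < n then swapAvgElem ⟨m, h⟩ else 1
  have hprefix : ∀ m ≤ n, ((∏ k ∈ range m, a k : swapAvgAlgebra n) :
      Module.End ℝ (Perm (Fin n) → ℝ)) (Pi.single 1 1) = uniformPrefix n m := by
    intro m hm
    induction m with
    | zero => simp [uniformPrefix_zero]
    | succ m ih =>
      rw [prod_range_succ_comm, Subalgebra.coe_mul, Module.End.mul_apply, ih (by omega)]
      simp only [a, dif_pos (Nat.lt_of_succ_le hm)]
      exact swapAvg_uniformPrefix _
  rw [← uniformPrefix_self, ← hprefix n le_rfl, ← Fin.prod_univ_eq_prod_range]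
  simp [a]

lemma prod_swapAvgElem_comp_apply_single {α : Type*} [Fintype α] {w : α → Fin n}
    (hw : Function.Surjective w) :
    ((∏ x, swapAvgElem (w x) : swapAvgAlgebra n) : Module.End ℝ (Perm (Fin n) → ℝ))
      (Pi.single 1 1) = fun _ => (n ! : ℝ)⁻¹ := by
  have hr : ∏ j, swapAvgElem j ^ (#{x | w x = j} - 1) ∈ markovElems n :=
    prod_mem fun j _ => pow_mem (swapAvgElem_mem_markovElems j) _
  rw [prod_comp_eq_prod_mul_prod_pow_of_surjective _ hw, mul_comm, Subalgebra.coe_mul,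
    Module.End.mul_apply, prod_swapAvgElem_apply_single]
  exact markovOps.apply_const hr _

lemma prod_swapAvgElem_comp_apply_single_nonneg {α : Type*} [Fintype α] (w : α → Fin n) :
    0 ≤ ((∏ x, swapAvgElem (w x) : swapAvgAlgebra n) : Module.End ℝ (Perm (Fin n) → ℝ))
      (Pi.single 1 1) :=
  (prod_mem fun x _ => swapAvgElem_mem_markovElems (w x) : _ ∈ markovElems n).1 _
    (Pi.single_nonneg.2 zero_le_one)

lemma ostOp_pow (t : ℕ) :
    ostOp n ^ t = (((n : ℝ) ^ t)⁻¹ • ∑ w : Fin t → Fin n, ∏ x, swapAvgElem (w x) :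
      swapAvgAlgebra n) := by
  have : ostOp n = (((n : ℝ)⁻¹ • ∑ j, swapAvgElem j : swapAvgAlgebra n) :
      Module.End ℝ (Perm (Fin n) → ℝ)) := by
    simp [ostOp, swapAvgElem]
  rw [this, ← Subalgebra.coe_pow, smul_pow, Fintype.sum_pow, inv_pow]

lemma one_sub_factorial_mul_convPow_OST_le (hn : 0 < n) (t : ℕ) (σ : Perm (Fin n)) :
    1 - n ! * convPow (OST n) t σ
      ≤ #{w : Fin t → Fin n | ¬ Function.Surjective w} / (n : ℝ) ^ t := by
  have hword : ∀ w : Fin t → Fin n, (if Function.Surjective w then (n ! : ℝ)⁻¹ else 0)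
      ≤ ((∏ x, swapAvgElem (w x) : swapAvgAlgebra n) : Module.End ℝ (Perm (Fin n) → ℝ))
        (Pi.single 1 1) σ := by
    intro w
    split_ifs with hw
    · rw [prod_swapAvgElem_comp_apply_single hw]
    · exact prod_swapAvgElem_comp_apply_single_nonneg w σ
  have hsum := sum_le_sum fun w (_ : w ∈ univ) => hword w
  rw [sum_ite, sum_const, sum_const_zero, add_zero, nsmul_eq_mul] at hsum
  have hcard : (#{w : Fin t → Fin n | Function.Surjective w} : ℝ)
      + #{w : Fin t → Fin n | ¬ Function.Surjective w} = (n : ℝ) ^ t := by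
    rw [← Nat.cast_add, card_filter_add_card_filter_not]
    simp
  rw [convPow_OST, ostOp_pow]
  simp only [Subalgebra.coe_smul, AddSubmonoidClass.coe_finsetSum, LinearMap.smul_apply,
    LinearMap.sum_apply, Pi.smul_apply, Finset.sum_apply, smul_eq_mul]
  calc _ ≤ 1 - n ! * (((n : ℝ) ^ t)⁻¹
          * (#{w : Fin t → Fin n | Function.Surjective w} * (n ! : ℝ)⁻¹)) := by
        gcongr
    _ = _ := by
        have hnt : (n : ℝ) ^ t ≠ 0 := by positivity
        field_simp
        linarith

theorem ost_sep_upper_general (n : ℕ) (hn : 1 ≤ n) (c : ℝ) (t : ℕ)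
    (ht : (n : ℝ) * Real.log n + c * n ≤ (t : ℝ)) :
    sepDist (convPow (OST n) t) ≤ Real.exp (-c) := by
  have hcount : (#{w : Fin t → Fin n | ¬ Function.Surjective w} : ℝ) ≤ n * (n - 1) ^ t := by
    have := card_filter_not_surjective_le (α := Fin t) (ι := Fin n)
    simp only [Fintype.card_fin] at this
    exact_mod_cast (Nat.cast_le.2 this).trans_eq (by push_cast [Nat.cast_sub hn]; ring)
  refine ciSup_le fun σ => (one_sub_factorial_mul_convPow_OST_le hn t σ).trans ?_
  refine le_trans ?_ (mul_one_sub_inv_pow_le_exp (Nat.one_le_cast.2 hn) ht)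
  rw [div_le_iff₀ (by positivity), mul_assoc, ← mul_pow, sub_mul, inv_mul_cancel₀ (by positivity),
    one_mul]
  exact hcount

/-- Separation-distance upper bound for the one-sided transposition shuffle: for `n ≥ 1`,
`c > 0`, and every `t ≥ n log n + c n`, `sep(OST_n^t) ≤ e^{−c}`. -/
theorem ost_sep_upper (n : ℕ) (hn : 1 ≤ n) (c : ℝ) (hc : 0 < c) (t : ℕ)
    (ht : (n : ℝ) * Real.log n + c * n ≤ (t : ℝ)) :
    sepDist (convPow (OST n) t) ≤ Real.exp (-c) :=
  ost_sep_upper_general n hn c t ht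
end
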